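/- arXiv:2601.22818 — 3 statements merged into one kernel-verified Lean document; each statement's English description precedes it below -/
import Mathlib

section
/- Let P and Q be probability distributions on a finite vocabulary V, and let t* ∈ V. If Q is required to satisfy Q(t) ≤ Q(t*) for all t ∈ V (i.e., t* is a maximizer of Q), then the minimizer of the KL divergence D_KL(Q ‖ P) subject to these constraints has the pooled form: there is a set C ⊆ V \ {t*} of size k, a constant r = (P(t*) · ∏_{t∈C} P(t))^{1/(k+1)} (the geometric mean of the pooled probabilities), and α = 1/Z with Z = (k+1)r + Σ_{t∉C∪{t*}} P(t), such that Q(t*) = αr, Q(t) = αr for t ∈ C, and Q(t) = αP(t) otherwise. -/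
/-!
Perturb the minimiser `Q` along the direction that moves mass from its peak set
`B = {t | Q t = Q t*}` (the pooled set `C ∪ {t*}`) to a single point `s ∉ B`. Since the
constraints off `B` are strict, small steps in either admissible direction stay feasible.
As `x log x` has slope `-∞` at `0⁺`, `Q` is positive off `B`; first-order optimality then gives
`|B| log (Q s / P s) = ∑_{t ∈ B} log (Q t* / P t)`, i.e. `Q s = (Q t* / r) P s` with `r` the
geometric mean of `P` on `B`, and normalisation identifies `Q t* / r` as `1 / Z`.
-/

open Real Filter Topology Finset

theorem hasDerivAt_mul_log_div_affine {a b p : ℝ} (hab : a ≠ 0 ∨ b = 0) (hp : p ≠ 0) :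
    HasDerivAt (fun y => (a + y * b) * log ((a + y * b) / p)) (b * (log (a / p) + 1)) 0 := by
  rcases hab with ha | rfl
  · have hlin : HasDerivAt (fun y : ℝ => a + y * b) b 0 := by
      simpa using ((hasDerivAt_id (0 : ℝ)).mul_const b).const_add a
    have hlog := (hlin.div_const p).log (by simpa using div_ne_zero ha hp)
    refine (hlin.fun_mul hlog).congr_deriv ?_
    simp only [zero_mul, add_zero]
    field_simp
  · simpa using hasDerivAt_const (0 : ℝ) (a * log (a / p))

theorem eventually_add_mul_log_div_lt {g : ℝ → ℝ} {g' a p : ℝ} (hg : HasDerivAt g g' 0)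
    (ha : 0 < a) (hp : 0 < p) :
    ∀ᶠ y in 𝓝[>] 0, g y + y * a * log (y * a / p) < g 0 := by
  have hscale : Tendsto (fun y => y * a / p) (𝓝[>] 0) (𝓝[>] 0) := by
    refine tendsto_nhdsWithin_iff.2 ⟨?_, ?_⟩
    · simpa using ((continuous_id.mul_const a).div_const p).continuousWithinAt (x := 0)
        (s := Set.Ioi 0) |>.tendsto
    · filter_upwards [self_mem_nhdsWithin] with y (hy : 0 < y)
      exact div_pos (mul_pos hy ha) hp
  have hlog := (tendsto_log_nhdsGT_zero.comp hscale).const_mul_atBot ha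
  filter_upwards [(hg.tendsto_slope_zero_right.add_atBot hlog).eventually_lt_atBot 0,
    self_mem_nhdsWithin] with y hy (hy0 : 0 < y)
  simp only [zero_add, smul_eq_mul, Function.comp_apply] at hy
  have := mul_lt_mul_of_pos_left hy hy0
  field_simp at this
  linarith

section

variable {V : Type*}

noncomputable def geomMean (B : Finset V) (P : V → ℝ) : ℝ := (∏ t ∈ B, P t) ^ ((1 : ℝ) / #B)

theorem card_mul_log_geomMean {B : Finset V} {P : V → ℝ} (hP : ∀ t ∈ B, 0 < P t) :
    #B * log (geomMean B P) = ∑ t ∈ B, log (P t) := by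
  rw [geomMean, log_rpow (prod_pos hP), log_prod fun t ht => (hP t ht).ne']
  rcases B.eq_empty_or_nonempty with rfl | hB
  · simp
  · field_simp [hB.card_pos.ne']

theorem eq_div_geomMean_mul_of_card_mul_log_eq {B : Finset V} {P : V → ℝ} {c q p : ℝ}
    (hB : B.Nonempty) (hP : ∀ t ∈ B, 0 < P t) (hc : 0 < c) (hq : 0 < q) (hp : 0 < p)
    (h : #B * log (q / p) = ∑ t ∈ B, log (c / P t)) : q = c / geomMean B P * p := by
  have hr : 0 < geomMean B P := rpow_pos_of_pos (prod_pos hP) _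
  have hK : (0 : ℝ) < #B := by exact_mod_cast hB.card_pos
  have hsum : ∑ t ∈ B, log (c / P t) = #B * log (c / geomMean B P) := by
    rw [log_div hc.ne' hr.ne', mul_sub, card_mul_log_geomMean hP,
      sum_congr rfl fun t ht => log_div hc.ne' (hP t ht).ne', sum_sub_distrib, sum_const,
      nsmul_eq_mul]
  have hlog := mul_left_cancel₀ hK.ne' (h.trans hsum)
  exact (div_eq_iff hp.ne').1 (log_injOn_pos (div_pos hq hp) (div_pos hc hr) hlog)

variable [Fintype V]

noncomputable def relEntropy (P Q : V → ℝ) : ℝ := ∑ t, Q t * log (Q t / P t)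

theorem relEntropy_add_smul (P Q b : V → ℝ) (y : ℝ) :
    relEntropy P (Q + y • b) = ∑ t, (Q t + y * b t) * log ((Q t + y * b t) / P t) := rfl

def simplexWithMode (tstar : V) : Set (V → ℝ) :=
  {Q | (∀ t, 0 ≤ Q t) ∧ ∑ t, Q t = 1 ∧ ∀ t, Q t ≤ Q tstar}

noncomputable def peakSet (Q : V → ℝ) (tstar : V) : Finset V := {t | Q t = Q tstar}

theorem mem_peakSet {Q : V → ℝ} {tstar t : V} : t ∈ peakSet Q tstar ↔ Q t = Q tstar := by
  simp [peakSet]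

theorem pos_of_mem_simplexWithMode {Q : V → ℝ} {tstar : V} (hQ : Q ∈ simplexWithMode tstar) :
    0 < Q tstar := by
  obtain ⟨-, hsum, hmax⟩ := hQ
  by_contra! h
  have : ∑ t, Q t ≤ 0 := sum_nonpos fun t _ => (hmax t).trans h
  linarith

variable [DecidableEq V]

/-- Moving mass from the whole peak set at once keeps `t*` a maximiser and the total mass fixed. -/
def transfer (B : Finset V) (s : V) : V → ℝ :=
  fun t => if t = s then (#B : ℝ) else if t ∈ B then -1 else 0

theorem sum_transfer_mul {B : Finset V} {s : V} (hs : s ∉ B) (g : V → ℝ) :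
    ∑ t, transfer B s t * g t = #B * g s - ∑ t ∈ B, g t := by
  have hsplit : ∀ t, transfer B s t * g t =
      (if t = s then #B * g t else 0) - if t ∈ B then g t else 0 := by
    intro t
    by_cases hts : t = s
    · subst hts; simp [transfer, hs]
    · by_cases htB : t ∈ B <;> simp [transfer, hts, htB]
  simp only [hsplit, sum_sub_distrib, sum_ite_eq', mem_univ, if_true, sum_ite_mem, univ_inter]

theorem sum_transfer {B : Finset V} {s : V} (hs : s ∉ B) : ∑ t, transfer B s t = 0 := by
  simpa using sum_transfer_mul hs 1

theorem eventually_add_smul_transfer_mem {Q : V → ℝ} {tstar s : V}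
    (hQ : Q ∈ simplexWithMode tstar) (hs : Q s < Q tstar) :
    ∀ᶠ y in 𝓝 0, 0 ≤ Q s + y * #(peakSet Q tstar) →
      Q + y • transfer (peakSet Q tstar) s ∈ simplexWithMode tstar := by
  obtain ⟨hnn, hsum, hmax⟩ := hQ
  set B := peakSet Q tstar
  have hsB : s ∉ B := by simpa [B, mem_peakSet] using hs.ne
  have htB : tstar ∈ B := mem_peakSet.2 rfl
  have hpeak : ∀ᶠ y in 𝓝 (0 : ℝ), 0 < Q tstar - y :=
    ContinuousAt.eventually_lt (by fun_prop) (by fun_prop) (by simpa using hnn s |>.trans_lt hs)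
  have hbelow : ∀ᶠ y in 𝓝 (0 : ℝ), ∀ t, Q t + y * transfer B s t ≤ Q tstar - y := by
    refine eventually_all.2 fun t => ?_
    by_cases htB : t ∈ B
    · refine Eventually.of_forall fun y => le_of_eq ?_
      have hts : t ≠ s := fun h => hsB (h ▸ htB)
      simp [transfer, hts, htB, mem_peakSet.1 htB, sub_eq_add_neg]
    · refine (ContinuousAt.eventually_lt (by fun_prop) (by fun_prop) ?_).mono fun y => le_of_lt
      simpa using (hmax t).lt_of_ne (by simpa [B, mem_peakSet] using htB)
  have htstar : tstar ≠ s := fun h => hsB (h ▸ htB)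
  filter_upwards [hpeak, hbelow] with y hpeak hbelow hs0
  refine ⟨fun t => ?_, ?_, fun t => ?_⟩
  · by_cases hts : t = s
    · simpa [hts, transfer] using hs0
    by_cases htB : t ∈ B
    · simpa [transfer, hts, htB, mem_peakSet.1 htB, sub_eq_add_neg] using hpeak.le
    · simpa [transfer, hts, htB] using hnn t
  · simp [sum_add_distrib, ← mul_sum, sum_transfer hsB, hsum]
  · simpa [transfer, htstar, htB, sub_eq_add_neg] using hbelow t

theorem pos_of_isMinOn_relEntropy {P Q : V → ℝ} {tstar s : V} (hP : ∀ t, 0 < P t)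
    (hQ : Q ∈ simplexWithMode tstar) (hmin : IsMinOn (relEntropy P) (simplexWithMode tstar) Q)
    (hs : Q s < Q tstar) : 0 < Q s := by
  set B := peakSet Q tstar
  have hB : (0 : ℝ) < #B := by exact_mod_cast card_pos.2 ⟨tstar, mem_peakSet.2 rfl⟩
  refine (hQ.1 s).lt_of_ne' fun hQs => ?_
  set g := fun y => ∑ t ∈ univ.erase s,
    (Q t + y * transfer B s t) * log ((Q t + y * transfer B s t) / P t)
  have hsplit : ∀ y, relEntropy P (Q + y • transfer B s) = g y + y * #B * log (y * #B / P s) := by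
    intro y
    rw [relEntropy_add_smul, ← add_sum_erase univ _ (mem_univ s), add_comm]
    congr 1
    simp [transfer, hQs]
  have hg : HasDerivAt g (∑ t ∈ univ.erase s, transfer B s t * (log (Q t / P t) + 1)) 0 := by
    refine HasDerivAt.fun_sum fun t ht => hasDerivAt_mul_log_div_affine ?_ (hP t).ne'
    by_cases htB : t ∈ B
    · exact .inl (by rw [mem_peakSet.1 htB]; exact ((hQ.1 s).trans_lt hs).ne')
    · exact .inr (by simp [transfer, ne_of_mem_erase ht, htB])
  have hfeasible : ∀ᶠ y : ℝ in 𝓝[>] 0, relEntropy P Q ≤ relEntropy P (Q + y • transfer B s) := by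
    filter_upwards [(eventually_add_smul_transfer_mem hQ hs).filter_mono nhdsWithin_le_nhds,
      self_mem_nhdsWithin] with y hy (hy0 : 0 < y)
    exact isMinOn_iff.1 hmin _ (hy (by rw [hQs]; positivity))
  obtain ⟨y, hlt, hle⟩ := ((eventually_add_mul_log_div_lt hg hB (hP s)).and hfeasible).exists
  have hg0 : g 0 = relEntropy P Q := by simpa using (hsplit 0).symm
  rw [hsplit, ← hg0] at hle
  exact hle.not_gt hlt

theorem card_mul_log_eq_of_isMinOn_relEntropy {P Q : V → ℝ} {tstar s : V} (hP : ∀ t, 0 < P t)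
    (hQ : Q ∈ simplexWithMode tstar) (hmin : IsMinOn (relEntropy P) (simplexWithMode tstar) Q)
    (hpos : ∀ t, 0 < Q t) (hs : Q s < Q tstar) :
    #(peakSet Q tstar) * log (Q s / P s) = ∑ t ∈ peakSet Q tstar, log (Q tstar / P t) := by
  set B := peakSet Q tstar
  have hsB : s ∉ B := by simpa [B, mem_peakSet] using hs.ne
  have hloc : IsLocalMin (fun y : ℝ => relEntropy P (Q + y • transfer B s)) 0 := by
    have hs0 : ∀ᶠ y in 𝓝 (0 : ℝ), 0 < Q s + y * #B :=
      ContinuousAt.eventually_lt (by fun_prop) (by fun_prop) (by simpa using hpos s)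
    filter_upwards [eventually_add_smul_transfer_mem hQ hs, hs0] with y hy hy0
    simpa using isMinOn_iff.1 hmin _ (hy hy0.le)
  have hderiv : HasDerivAt (fun y : ℝ => relEntropy P (Q + y • transfer B s))
      (∑ t, transfer B s t * (log (Q t / P t) + 1)) 0 :=
    HasDerivAt.fun_sum fun t _ => hasDerivAt_mul_log_div_affine (.inl (hpos t).ne') (hP t).ne'
  have hzero := hloc.hasDerivAt_eq_zero hderiv
  rw [sum_transfer_mul hsB, sum_add_distrib] at hzero
  have hpeak : ∑ t ∈ B, log (Q t / P t) = ∑ t ∈ B, log (Q tstar / P t) :=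
    sum_congr rfl fun t ht => by rw [mem_peakSet.1 ht]
  simp only [hpeak, sum_const, nsmul_eq_mul, mul_one] at hzero
  linarith

theorem eq_one_div_of_sum_eq_one {P Q : V → ℝ} {B : Finset V} {α r : ℝ} (hsum : ∑ t, Q t = 1)
    (hB : ∀ t ∈ B, Q t = α * r) (hout : ∀ t ∉ B, Q t = α * P t) :
    α = 1 / (#B * r + ∑ t ∈ univ \ B, P t) := by
  refine eq_one_div_of_mul_eq_one_right ?_
  rw [← hsum, ← sum_sdiff (subset_univ B), sum_congr rfl hB,
    sum_congr rfl fun t ht => hout t (mem_sdiff.1 ht).2, ← mul_sum, sum_const, nsmul_eq_mul]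
  ring

end

theorem kl_minimizer_pooled_form_general {V : Type*} [Fintype V] [DecidableEq V]
    (P : V → ℝ) (hPpos : ∀ t, 0 < P t)
    (tstar : V) (Q : V → ℝ)
    (hQnn : ∀ t, 0 ≤ Q t) (hQsum : ∑ t, Q t = 1) (hQmax : ∀ t, Q t ≤ Q tstar)
    (hmin : ∀ Q' : V → ℝ, (∀ t, 0 ≤ Q' t) → (∑ t, Q' t = 1) → (∀ t, Q' t ≤ Q' tstar) →
      (∑ t, Q t * Real.log (Q t / P t)) ≤ ∑ t, Q' t * Real.log (Q' t / P t)) :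
    ∃ C : Finset V, tstar ∉ C ∧
      ∃ r α : ℝ,
        r = (P tstar * ∏ t ∈ C, P t) ^ ((1 : ℝ) / (C.card + 1)) ∧
        α = 1 / ((C.card + 1 : ℝ) * r + ∑ t ∈ Finset.univ \ insert tstar C, P t) ∧
        Q tstar = α * r ∧
        (∀ t ∈ C, Q t = α * r) ∧
        (∀ t, t ∉ insert tstar C → Q t = α * P t) := by
  have hQ : Q ∈ simplexWithMode tstar := ⟨hQnn, hQsum, hQmax⟩
  have hQmin : IsMinOn (relEntropy P) (simplexWithMode tstar) Q :=
    isMinOn_iff.2 fun Q' hQ' => hmin Q' hQ'.1 hQ'.2.1 hQ'.2.2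
  set B := peakSet Q tstar
  have htB : tstar ∈ B := mem_peakSet.2 rfl
  have hbelow : ∀ t ∉ B, Q t < Q tstar := fun t ht =>
    (hQmax t).lt_of_ne fun h => ht (mem_peakSet.2 h)
  have hc := pos_of_mem_simplexWithMode hQ
  have hpos : ∀ t, 0 < Q t := fun t =>
    if ht : t ∈ B then mem_peakSet.1 ht ▸ hc
    else pos_of_isMinOn_relEntropy hPpos hQ hQmin (hbelow t ht)
  set r := geomMean B P
  have hr : 0 < r := rpow_pos_of_pos (prod_pos fun t _ => hPpos t) _
  set α := Q tstar / r
  have hpeak : ∀ t ∈ B, Q t = α * r := fun t ht => by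
    rw [mem_peakSet.1 ht, div_mul_cancel₀ _ hr.ne']
  have hout : ∀ t ∉ B, Q t = α * P t := fun t ht =>
    eq_div_geomMean_mul_of_card_mul_log_eq ⟨tstar, htB⟩ (fun t _ => hPpos t) hc (hpos t)
      (hPpos t) (card_mul_log_eq_of_isMinOn_relEntropy hPpos hQ hQmin hpos (hbelow t ht))
  have hcard : ((#(B.erase tstar) : ℕ) : ℝ) + 1 = #B := by exact_mod_cast card_erase_add_one htB
  refine ⟨B.erase tstar, notMem_erase _ _, r, α, ?_, ?_, hpeak tstar htB,
    fun t ht => hpeak t (mem_of_mem_erase ht), ?_⟩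
  · rw [mul_prod_erase _ _ htB, hcard]; rfl
  · rw [hcard, insert_erase htB]
    exact eq_one_div_of_sum_eq_one hQsum hpeak hout
  · rwa [insert_erase htB]

/-- The KL projection onto {Q : Q(t) ≤ Q(t*) ∀ t} has the pooled-and-rescaled form. -/
theorem kl_minimizer_pooled_form {V : Type*} [Fintype V] [DecidableEq V]
    (P : V → ℝ) (hPpos : ∀ t, 0 < P t) (hPsum : ∑ t, P t = 1)
    (tstar : V) (Q : V → ℝ)
    (hQnn : ∀ t, 0 ≤ Q t) (hQsum : ∑ t, Q t = 1) (hQmax : ∀ t, Q t ≤ Q tstar)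
    (hmin : ∀ Q' : V → ℝ, (∀ t, 0 ≤ Q' t) → (∑ t, Q' t = 1) → (∀ t, Q' t ≤ Q' tstar) →
      (∑ t, Q t * Real.log (Q t / P t)) ≤ ∑ t, Q' t * Real.log (Q' t / P t)) :
    ∃ C : Finset V, tstar ∉ C ∧
      ∃ r α : ℝ,
        r = (P tstar * ∏ t ∈ C, P t) ^ ((1 : ℝ) / (C.card + 1)) ∧
        α = 1 / ((C.card + 1 : ℝ) * r + ∑ t ∈ Finset.univ \ insert tstar C, P t) ∧
        Q tstar = α * r ∧
        (∀ t ∈ C, Q t = α * r) ∧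
        (∀ t, t ∉ insert tstar C → Q t = α * P t) :=
  kl_minimizer_pooled_form_general P hPpos tstar Q hQnn hQsum hQmax hmin
end

section
/- Let P be a probability distribution on finite V and let Q* be the pooled distribution defined by: Q*(t) = αr for t ∈ C ∪ {t*} and Q*(t) = αP(t) for t ∈ U := V \ (C ∪ {t*}), where r = (P(t*) · ∏_{t∈C} P(t))^{1/(|C|+1)}, Z = (|C|+1)r + Σ_{t∈U} P(t), and α = 1/Z. Then D_KL(Q* ‖ P) = log α = −log Z. -/
/-!
Write `Q* = α g`, where `g` is `P` with its values on `S = C ∪ {t*}` replaced by their geometric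
mean `r`. Then `∑ Q* log (Q*/P) = (∑ Q*) log α + α ∑ g log (g/P)`. The first sum is `α Z = 1`.
In the second, the terms outside `S` are `P t log 1 = 0`, and those on `S` add up to
`r ∑_S log (r / P t) = 0` because `log r` is the mean of `log P` over `S`.
-/

open Real Finset

theorem Finset.sum_log_geomMean_div_eq_zero {ι : Type*} (s : Finset ι) (f : ι → ℝ)
    (hf : ∀ i ∈ s, 0 < f i) :
    ∑ i ∈ s, log ((∏ j ∈ s, f j) ^ ((1 : ℝ) / #s) / f i) = 0 := by
  obtain rfl | hs := s.eq_empty_or_nonempty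
  · exact sum_empty
  have hprod : 0 < ∏ j ∈ s, f j := prod_pos hf
  have hcard : (#s : ℝ) ≠ 0 := Nat.cast_ne_zero.mpr hs.card_pos.ne'
  rw [sum_congr rfl fun i hi => log_div (rpow_pos_of_pos hprod _).ne' (hf i hi).ne',
    sum_sub_distrib, sum_const, nsmul_eq_mul, log_rpow hprod,
    log_prod fun i hi => (hf i hi).ne']
  field_simp
  ring

theorem sum_const_mul_mul_log_div {ι : Type*} (s : Finset ι) {α : ℝ} (hα : α ≠ 0)
    (g P : ι → ℝ) (hg : ∀ i ∈ s, g i ≠ 0) (hP : ∀ i ∈ s, P i ≠ 0) :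
    ∑ i ∈ s, α * g i * log (α * g i / P i) =
      α * (∑ i ∈ s, g i) * log α + α * ∑ i ∈ s, g i * log (g i / P i) := by
  have hsplit : ∀ i ∈ s, log (α * g i / P i) = log α + log (g i / P i) := fun i hi => by
    rw [mul_div_assoc, log_mul hα (div_ne_zero (hg i hi) (hP i hi))]
  rw [sum_congr rfl fun i hi => by rw [hsplit i hi], mul_sum, sum_mul, mul_sum, ← sum_add_distrib]
  exact sum_congr rfl fun i _ => by ring

theorem sum_piecewise_geomMean_mul_log_div_eq_zero {V : Type*} [Fintype V] [DecidableEq V]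
    (S : Finset V) (P : V → ℝ) (hP : ∀ t ∈ S, 0 < P t)
    (r : ℝ) (hr : r = (∏ t ∈ S, P t) ^ ((1 : ℝ) / #S)) :
    ∑ t, S.piecewise (fun _ => r) P t * log (S.piecewise (fun _ => r) P t / P t) = 0 := by
  rw [← sum_add_sum_compl S]
  have hpooled : ∑ t ∈ S, S.piecewise (fun _ => r) P t * log (S.piecewise (fun _ => r) P t / P t)
      = r * ∑ t ∈ S, log (r / P t) := by
    rw [mul_sum]
    exact sum_congr rfl fun t ht => by rw [piecewise_eq_of_mem _ _ _ ht]
  rw [hpooled, hr, S.sum_log_geomMean_div_eq_zero P hP, mul_zero, zero_add]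
  refine sum_eq_zero fun t ht => ?_
  rw [piecewise_eq_of_notMem _ _ _ (mem_compl.mp ht)]
  by_cases hPt : P t = 0
  · simp [hPt]
  · simp [div_self hPt]

theorem kl_pooled_eq_log_alpha_general {V : Type*} [Fintype V] [DecidableEq V]
    (P : V → ℝ) (hPpos : ∀ t, 0 < P t)
    (tstar : V) (C : Finset V) (hC : tstar ∉ C)
    (r Z α : ℝ)
    (hr : r = (P tstar * ∏ t ∈ C, P t) ^ ((1 : ℝ) / (C.card + 1)))
    (hZ : Z = (C.card + 1 : ℝ) * r + ∑ t ∈ Finset.univ \ insert tstar C, P t)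
    (hα : α = 1 / Z)
    (Qstar : V → ℝ)
    (hQstar : ∀ t, Qstar t = if t ∈ insert tstar C then α * r else α * P t) :
    (∑ t, Qstar t * Real.log (Qstar t / P t)) = Real.log α ∧
    Real.log α = - Real.log Z := by
  set S := insert tstar C
  have hcard : (#S : ℝ) = C.card + 1 := by simp [S, card_insert_of_notMem hC]
  have hr : r = (∏ t ∈ S, P t) ^ ((1 : ℝ) / #S) := by rw [hr, prod_insert hC, hcard]
  have hrpos : 0 < r := hr ▸ rpow_pos_of_pos (prod_pos fun t _ => hPpos t) _
  set g := S.piecewise (fun _ => r) P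
  have hgpos : ∀ t, 0 < g t := fun t => by
    by_cases ht : t ∈ S <;> simp [g, ht, hrpos, hPpos t]
  have hQ : ∀ t, Qstar t = α * g t := fun t => by
    by_cases ht : t ∈ S <;> simp [hQstar, g, ht]
  have hgsum : ∑ t, g t = Z := by
    rw [sum_piecewise, univ_inter, sum_const, nsmul_eq_mul, hcard, hZ]
  have hZpos : 0 < Z := hgsum ▸ sum_pos (fun t _ => hgpos t) ⟨tstar, mem_univ _⟩
  have hαZ : α * Z = 1 := by rw [hα]; field_simp
  have hcross : ∑ t, g t * log (g t / P t) = 0 :=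
    sum_piecewise_geomMean_mul_log_div_eq_zero S P (fun t _ => hPpos t) r hr
  refine ⟨?_, by rw [hα, one_div, log_inv]⟩
  simp only [hQ]
  rw [sum_const_mul_mul_log_div univ (by rw [hα]; positivity) g P (fun t _ => (hgpos t).ne')
    (fun t _ => (hPpos t).ne'), hgsum, hαZ, hcross]
  ring

/-- KL divergence of the pooled distribution Q* from P equals log α = −log Z. -/
theorem kl_pooled_eq_log_alpha {V : Type*} [Fintype V] [DecidableEq V]
    (P : V → ℝ) (hPpos : ∀ t, 0 < P t) (hPsum : ∑ t, P t = 1)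
    (tstar : V) (C : Finset V) (hC : tstar ∉ C)
    (r Z α : ℝ)
    (hr : r = (P tstar * ∏ t ∈ C, P t) ^ ((1 : ℝ) / (C.card + 1)))
    (hZ : Z = (C.card + 1 : ℝ) * r + ∑ t ∈ Finset.univ \ insert tstar C, P t)
    (hα : α = 1 / Z)
    (Qstar : V → ℝ)
    (hQstar : ∀ t, Qstar t = if t ∈ insert tstar C then α * r else α * P t) :
    (∑ t, Qstar t * Real.log (Qstar t / P t)) = Real.log α ∧
    Real.log α = - Real.log Z :=
  kl_pooled_eq_log_alpha_general P hPpos tstar C hC r Z α hr hZ hα Qstar hQstar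
end

section
/- Let x₁ ≥ x₂ ≥ … ≥ x_m > 0 and define g_k = (x* · x₁ · … · x_k)^{1/(k+1)} for a fixed x* > 0 and k = 0,…,m (with g₀ = x*). Then g_{k+1} ≥ g_k if and only if x_{k+1} ≥ g_k. Consequently, the greedy rule 'pool the next-largest token while it exceeds the current geometric mean' finds a k maximizing g_k. -/
/-- Greedy pooling optimality: with sorted positive values, the running geometric
mean g increases exactly when the next value exceeds it, and the greedy stopping
point maximizes g. -/
theorem greedy_pooling_optimal (m : ℕ) (xstar : ℝ) (hxstar : 0 < xstar)
    (x : ℕ → ℝ) (hpos : ∀ i, i < m → 0 < x i)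
    (hanti : ∀ i j, i ≤ j → j < m → x j ≤ x i) :
    ∀ g : ℕ → ℝ,
      (∀ k, g k = (xstar * ∏ i ∈ Finset.range k, x i) ^ ((1 : ℝ) / (k + 1))) →
      ((∀ k, k < m → (g k ≤ g (k + 1) ↔ g k ≤ x k)) ∧
       (∀ K, K ≤ m → (∀ j, j < K → g j ≤ x j) → (K = m ∨ x K < g K) →
         ∀ j, j ≤ m → g j ≤ g K)) := by
  intro g hg
  have hP : ∀ k, k ≤ m → 0 < xstar * ∏ i ∈ Finset.range k, x i := by
    intro k hk
    refine mul_pos hxstar (Finset.prod_pos ?_)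
    intro i hi
    exact hpos i (lt_of_lt_of_le (Finset.mem_range.mp hi) hk)
  have hgpos : ∀ k, k ≤ m → 0 < g k := by
    intro k hk
    rw [hg k]
    exact Real.rpow_pos_of_pos (hP k hk) _
  have hgpow : ∀ k, k ≤ m → (g k) ^ (k + 1) = xstar * ∏ i ∈ Finset.range k, x i := by
    intro k hk
    have hne : ((k : ℝ) + 1) ≠ 0 := by positivity
    rw [hg k, ← Real.rpow_natCast _ (k + 1), ← Real.rpow_mul (hP k hk).le]
    push_cast
    rw [one_div, inv_mul_cancel₀ hne, Real.rpow_one]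
  have hkey : ∀ k, k < m → (g (k + 1)) ^ (k + 1 + 1) = (g k) ^ (k + 1) * x k := by
    intro k hk
    rw [hgpow (k + 1) (by omega), hgpow k hk.le, Finset.prod_range_succ]
    ring
  have part1 : ∀ k, k < m → (g k ≤ g (k + 1) ↔ g k ≤ x k) := by
    intro k hk
    have h1 := hgpos k hk.le
    have h2 := hgpos (k + 1) (by omega)
    constructor
    · intro h
      have h3 : (g k) ^ (k + 1 + 1) ≤ (g (k + 1)) ^ (k + 1 + 1) :=
        pow_le_pow_left₀ h1.le h _
      rw [hkey k hk] at h3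
      have h4 : (g k) ^ (k + 1) * g k ≤ (g k) ^ (k + 1) * x k := by
        calc (g k) ^ (k + 1) * g k = (g k) ^ (k + 1 + 1) := by ring
          _ ≤ _ := h3
      exact le_of_mul_le_mul_left h4 (pow_pos h1 _)
    · intro h
      have h3 : (g k) ^ (k + 1 + 1) ≤ (g (k + 1)) ^ (k + 1 + 1) := by
        rw [hkey k hk]
        calc (g k) ^ (k + 1 + 1) = (g k) ^ (k + 1) * g k := by ring
          _ ≤ (g k) ^ (k + 1) * x k :=
            mul_le_mul_of_nonneg_left h (pow_nonneg h1.le _)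
      exact le_of_pow_le_pow_left₀ (by omega) h2.le h3
  have hdec : ∀ K, K < m → x K < g K →
      ∀ j, K ≤ j → j ≤ m → g j ≤ g K ∧ (j < m → x j < g j) := by
    intro K hK hxK j
    induction j with
    | zero =>
      intro h0 _
      have hK0 : K = 0 := Nat.le_zero.mp h0
      subst hK0
      exact ⟨le_refl _, fun _ => hxK⟩
    | succ n ih =>
      intro hKn hnm
      rcases Nat.lt_or_ge n K with h | h
      · have hKe : K = n + 1 := by omega
        subst hKe
        exact ⟨le_refl _, fun _ => hxK⟩
      · have hnm' : n < m := by omega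
        obtain ⟨hgn, hxn⟩ := ih h hnm'.le
        have hxgn := hxn hnm'
        have hlt : g (n + 1) < g n := by
          by_contra hc
          exact absurd ((part1 n hnm').mp (not_lt.mp hc)) (not_le.mpr hxgn)
        refine ⟨le_trans hlt.le hgn, fun hm => ?_⟩
        have hxp := hpos n hnm'
        have hxg1 : x n < g (n + 1) := by
          have h3 : (x n) ^ (n + 1 + 1) < (g (n + 1)) ^ (n + 1 + 1) := by
            rw [hkey n hnm']
            calc (x n) ^ (n + 1 + 1) = (x n) ^ (n + 1) * x n := by ring
              _ < (g n) ^ (n + 1) * x n :=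
                mul_lt_mul_of_pos_right (pow_lt_pow_left₀ hxgn hxp.le (by omega)) hxp
          exact lt_of_pow_lt_pow_left₀ _ (hgpos (n + 1) (by omega)).le h3
        exact lt_of_le_of_lt (hanti n (n + 1) (by omega) hm) hxg1
  have hmono : ∀ K, K ≤ m → (∀ j, j < K → g j ≤ x j) → ∀ j, j ≤ K → g j ≤ g K := by
    intro K hK hless
    have step : ∀ n, n < K → g n ≤ g (n + 1) := fun n hn =>
      (part1 n (lt_of_lt_of_le hn hK)).mpr (hless n hn)
    have main : ∀ b, b ≤ K → ∀ a, a ≤ b → g a ≤ g b := by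
      intro b
      induction b with
      | zero => intro _ a ha; rw [Nat.le_zero.mp ha]
      | succ n ih =>
        intro hb a ha
        rcases Nat.lt_or_ge a (n + 1) with h | h
        · exact le_trans (ih (by omega) a (by omega)) (step n (by omega))
        · have : a = n + 1 := by omega
          subst this; exact le_refl _
    exact fun j hj => main K le_rfl j hj
  refine ⟨part1, ?_⟩
  intro K hK hless hstop j hj
  rcases le_or_gt j K with h | h
  · exact hmono K hK hless j h
  · have hKm : K < m := lt_of_lt_of_le h hj
    rcases hstop with he | hx
    · omega
    · exact (hdec K hKm hx j h.le hj).1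
end
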